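/- Let A, B be matrices with B Aᵀ = 0 and A of full row rank, let M be symmetric positive definite, and let Ã = (A M Aᵀ)⁻¹ A M and B̃ = (B M⁻¹ Bᵀ)⁺ B M⁻¹, where range(Aᵀ) and range(Bᵀ) are orthogonal complements in ℝⁿ (w.r.t. the standard inner product). Then Ãᵀ A + Bᵀ B̃ = I. -/

import Mathlib

open Matrix

private lemma eq_of_mulVec_eq {m n : ℕ} {X Y : Matrix (Fin m) (Fin n) ℝ}
    (h : ∀ v, X *ᵥ v = Y *ᵥ v) : X = Y := by
  ext i j
  have := congrFun (h (Pi.single j 1)) i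
  simpa using this

private lemma dot_shift {m n : ℕ} (C : Matrix (Fin m) (Fin n) ℝ) (x : Fin m → ℝ)
    (w : Fin n → ℝ) : x ⬝ᵥ (C *ᵥ w) = (Cᵀ *ᵥ x) ⬝ᵥ w := by
  rw [dotProduct_mulVec, mulVec_transpose]

theorem complementarity_of_scalings {p q n : ℕ}
    (A : Matrix (Fin p) (Fin n) ℝ) (B : Matrix (Fin q) (Fin n) ℝ)
    (hA : Function.Injective Aᵀ.mulVecLin)
    (hBA : B * Aᵀ = 0)
    (hsum : LinearMap.range Aᵀ.mulVecLin ⊔ LinearMap.range Bᵀ.mulVecLin = ⊤)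
    (horth : ∀ x ∈ LinearMap.range Aᵀ.mulVecLin, ∀ y ∈ LinearMap.range Bᵀ.mulVecLin,
      x ⬝ᵥ y = 0)
    (M : Matrix (Fin n) (Fin n) ℝ) (hM : M.PosDef)
    (W : Matrix (Fin q) (Fin q) ℝ)
    (hW1 : (B * M⁻¹ * Bᵀ) * W * (B * M⁻¹ * Bᵀ) = B * M⁻¹ * Bᵀ)
    (hW2 : W * (B * M⁻¹ * Bᵀ) * W = W)
    (hW3 : ((B * M⁻¹ * Bᵀ) * W).IsSymm)
    (hW4 : (W * (B * M⁻¹ * Bᵀ)).IsSymm) :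
    ((A * M * Aᵀ)⁻¹ * A * M)ᵀ * A + Bᵀ * (W * B * M⁻¹) = 1 := by
  have hMT : Mᵀ = M := by
    rw [← conjTranspose_eq_transpose_of_trivial]; exact hM.1
  have hAinj : ∀ u : Fin p → ℝ, Aᵀ *ᵥ u = 0 → u = 0 := by
    intro u hu
    have h0 : Aᵀ.mulVecLin u = Aᵀ.mulVecLin 0 := by
      rw [Matrix.mulVecLin_apply, Matrix.mulVecLin_apply, hu, Matrix.mulVec_zero]
    exact hA h0
  have hABt : A * Bᵀ = 0 := by
    have := congrArg Matrix.transpose hBA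
    simpa [Matrix.transpose_mul] using this
  -- A * M * Aᵀ is positive definite
  have hherm : (A * M * Aᵀ).IsHermitian := by
    have h := Matrix.isHermitian_mul_mul_conjTranspose A hM.1
    rwa [conjTranspose_eq_transpose_of_trivial] at h
  have hAMA : (A * M * Aᵀ).PosDef := by
    refine PosDef.of_dotProduct_mulVec_pos hherm fun x hx => ?_
    have hy : Aᵀ *ᵥ x ≠ 0 := fun h => hx (hAinj x h)
    have hpos := hM.dotProduct_mulVec_pos hy
    rw [star_trivial] at hpos
    rw [star_trivial]
    have heq : x ⬝ᵥ ((A * M * Aᵀ) *ᵥ x) = (Aᵀ *ᵥ x) ⬝ᵥ (M *ᵥ (Aᵀ *ᵥ x)) := by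
      rw [← mulVec_mulVec, ← mulVec_mulVec, dot_shift A x (M *ᵥ (Aᵀ *ᵥ x))]
    rwa [heq]
  have hdet : IsUnit (A * M * Aᵀ).det := hAMA.det_pos.ne'.isUnit
  have hdetM : IsUnit M.det := hM.det_pos.ne'.isUnit
  -- key pseudoinverse property: Bᵀ * (W * (B * M⁻¹ * Bᵀ)) = Bᵀ
  have hL : ∀ y : Fin q → ℝ, (B * M⁻¹ * Bᵀ) *ᵥ y = 0 → Bᵀ *ᵥ y = 0 := by
    intro y hy
    by_contra hne
    have hpos := hM.inv.dotProduct_mulVec_pos hne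
    rw [star_trivial] at hpos
    have heq : (Bᵀ *ᵥ y) ⬝ᵥ (M⁻¹ *ᵥ (Bᵀ *ᵥ y)) = y ⬝ᵥ ((B * M⁻¹ * Bᵀ) *ᵥ y) := by
      rw [← dot_shift B y (M⁻¹ *ᵥ (Bᵀ *ᵥ y)), mulVec_mulVec, mulVec_mulVec]
    rw [heq, hy, dotProduct_zero] at hpos
    exact lt_irrefl 0 hpos
  have hkey : Bᵀ * (W * (B * M⁻¹ * Bᵀ)) = Bᵀ := by
    apply eq_of_mulVec_eq
    intro v
    have h0 : (B * M⁻¹ * Bᵀ) *ᵥ ((W * (B * M⁻¹ * Bᵀ)) *ᵥ v - v) = 0 := by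
      rw [mulVec_sub, mulVec_mulVec, ← Matrix.mul_assoc, hW1, sub_self]
    have h1 := hL _ h0
    rw [mulVec_sub] at h1
    rw [← mulVec_mulVec]
    exact sub_eq_zero.mp h1
  -- decomposition of any vector
  have hdecomp : ∀ z : Fin n → ℝ, ∃ u v, z = (M * Aᵀ) *ᵥ u + Bᵀ *ᵥ v := by
    intro z
    have hmm : A * ((M * Aᵀ) * ((A * M * Aᵀ)⁻¹ * A)) = A := by
      simp only [← Matrix.mul_assoc]
      rw [Matrix.mul_nonsing_inv _ hdet, Matrix.one_mul]
    set r := z - ((M * Aᵀ) * ((A * M * Aᵀ)⁻¹ * A)) *ᵥ z with hrdef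
    have hAr : A *ᵥ r = 0 := by
      rw [hrdef, mulVec_sub, mulVec_mulVec, hmm, sub_self]
    have hrmem : r ∈ LinearMap.range Bᵀ.mulVecLin := by
      have hmem : r ∈ LinearMap.range Aᵀ.mulVecLin ⊔ LinearMap.range Bᵀ.mulVecLin := by
        rw [hsum]; trivial
      obtain ⟨a, ha, b, hb, hab⟩ := Submodule.mem_sup.mp hmem
      have hadb : a ⬝ᵥ b = 0 := horth a ha b hb
      obtain ⟨w, hw⟩ := ha
      have hadr : a ⬝ᵥ r = 0 := by
        rw [← hw, Matrix.mulVecLin_apply, ← dot_shift A w r, hAr, dotProduct_zero]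
      have h3 : a ⬝ᵥ r = a ⬝ᵥ a + a ⬝ᵥ b := by rw [← hab, dotProduct_add]
      have haa : a = 0 := by
        apply dotProduct_self_eq_zero.mp
        linarith
      rw [haa, zero_add] at hab
      rw [← hab]; exact hb
    obtain ⟨v, hv⟩ := hrmem
    refine ⟨((A * M * Aᵀ)⁻¹ * A) *ᵥ z, v, ?_⟩
    have hbv : Bᵀ *ᵥ v = r := by rw [← Matrix.mulVecLin_apply]; exact hv
    rw [mulVec_mulVec, hbv, hrdef]
    abel
  -- rewrite the left factor
  have hT : (A * M * Aᵀ)ᵀ = A * M * Aᵀ := by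
    rw [transpose_mul, transpose_mul, transpose_transpose, hMT, ← Matrix.mul_assoc]
  have hLHS : ((A * M * Aᵀ)⁻¹ * A * M)ᵀ = M * Aᵀ * (A * M * Aᵀ)⁻¹ := by
    rw [transpose_mul, transpose_mul, transpose_nonsing_inv, hT, hMT, ← Matrix.mul_assoc]
  -- auxiliary product identities
  have hinv1R : (A * (M * Aᵀ))⁻¹ * (A * (M * Aᵀ)) = 1 := by
    refine Matrix.nonsing_inv_mul _ ?_
    rw [← Matrix.mul_assoc]; exact hdet
  have e1 : (M * Aᵀ * (A * M * Aᵀ)⁻¹ * A) * (M * Aᵀ) = M * Aᵀ := by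
    simp only [Matrix.mul_assoc]
    rw [hinv1R, Matrix.mul_one]
  have e2 : (M * Aᵀ * (A * M * Aᵀ)⁻¹ * A) * Bᵀ = 0 := by
    simp only [Matrix.mul_assoc]
    rw [hABt, Matrix.mul_zero, Matrix.mul_zero, Matrix.mul_zero]
  have e3 : (Bᵀ * (W * B * M⁻¹)) * (M * Aᵀ) = 0 := by
    simp only [Matrix.mul_assoc]
    rw [← Matrix.mul_assoc M⁻¹ M Aᵀ, Matrix.nonsing_inv_mul M hdetM, Matrix.one_mul,
      hBA, Matrix.mul_zero, Matrix.mul_zero]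
  have e4 : (Bᵀ * (W * B * M⁻¹)) * Bᵀ = Bᵀ := by
    simp only [Matrix.mul_assoc]
    simpa only [Matrix.mul_assoc] using hkey
  rw [hLHS]
  apply eq_of_mulVec_eq
  intro z
  obtain ⟨u, v, hz⟩ := hdecomp z
  rw [hz, one_mulVec]
  simp only [add_mulVec, mulVec_add, mulVec_mulVec, Matrix.add_mul, e1, e2, e3, e4,
    zero_mulVec, add_zero, zero_add]
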